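/- arXiv:2302.02903 — 6 statements merged into one kernel-verified Lean document; each statement's English description precedes it below -/
import Mathlib

section
/- Let P > 0 and σ̃² > 0 be real numbers and let h̃ ∈ ℂ. Then for every h ∈ ℂ and every ν > 0, ln(1 + |h|²P/ν) + (σ̃² + |h̃|²P)/(ν + |h|²P) − (σ̃² + |h̃ − h|²P)/ν ≤ ln(1 + |h̃|²P/σ̃²), and equality holds when h = h̃ and ν = σ̃². -/
/-!
Write `u = ν + a²P` and `S = σ + b²P`, with `a = |h|`, `b = |h̃|`, `c = |h̃ - h|`. Bounding the
difference of logarithms by `log x ≤ x - 1` reduces the claim to the polynomial inequality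
`σu² + νS² ≤ (ν + σ + c²P) S u`. Its defect is
`P ((c² - (b - a)²) S u + (νb - σa - ab(b - a)P)²)`, which is nonnegative because the triangle
inequality gives `(b - a)² ≤ c²`.
-/

lemma gmi_poly_le {P σ ν a b c : ℝ} (hP : 0 ≤ P) (hσ : 0 ≤ σ) (hν : 0 ≤ ν)
    (hc : (b - a) ^ 2 ≤ c ^ 2) :
    σ * (ν + a ^ 2 * P) ^ 2 + ν * (σ + b ^ 2 * P) ^ 2
      ≤ (ν + σ + c ^ 2 * P) * (σ + b ^ 2 * P) * (ν + a ^ 2 * P) := by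
  have defect : (ν + σ + c ^ 2 * P) * (σ + b ^ 2 * P) * (ν + a ^ 2 * P)
        - (σ * (ν + a ^ 2 * P) ^ 2 + ν * (σ + b ^ 2 * P) ^ 2)
      = P * ((c ^ 2 - (b - a) ^ 2) * (σ + b ^ 2 * P) * (ν + a ^ 2 * P)
          + (ν * b - σ * a - a * b * (b - a) * P) ^ 2) := by
    ring
  have : 0 ≤ P * ((c ^ 2 - (b - a) ^ 2) * (σ + b ^ 2 * P) * (ν + a ^ 2 * P)
      + (ν * b - σ * a - a * b * (b - a) * P) ^ 2) := by
    have := sub_nonneg.2 hc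
    positivity
  linarith

lemma gmi_rational_le {P σ ν a b c : ℝ} (hP : 0 ≤ P) (hσ : 0 < σ) (hν : 0 < ν)
    (hc : (b - a) ^ 2 ≤ c ^ 2) :
    (1 + a ^ 2 * P / ν) / (1 + b ^ 2 * P / σ) - 1
      + (σ + b ^ 2 * P) / (ν + a ^ 2 * P) - (σ + c ^ 2 * P) / ν ≤ 0 := by
  have hu : 0 < ν + a ^ 2 * P := by positivity
  have hS : 0 < σ + b ^ 2 * P := by positivity
  have : (1 + a ^ 2 * P / ν) / (1 + b ^ 2 * P / σ) - 1
        + (σ + b ^ 2 * P) / (ν + a ^ 2 * P) - (σ + c ^ 2 * P) / ν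
      = (σ * (ν + a ^ 2 * P) ^ 2 + ν * (σ + b ^ 2 * P) ^ 2
          - (ν + σ + c ^ 2 * P) * (σ + b ^ 2 * P) * (ν + a ^ 2 * P))
        / (ν * (σ + b ^ 2 * P) * (ν + a ^ 2 * P)) := by
    field_simp
    ring
  rw [this]
  exact div_nonpos_of_nonpos_of_nonneg
    (sub_nonpos.2 (gmi_poly_le hP hσ.le hν.le hc)) (by positivity)

lemma gmi_le_log_one_add_snr {P σ ν a b c : ℝ} (hP : 0 ≤ P) (hσ : 0 < σ) (hν : 0 < ν)
    (hc : (b - a) ^ 2 ≤ c ^ 2) :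
    Real.log (1 + a ^ 2 * P / ν) + (σ + b ^ 2 * P) / (ν + a ^ 2 * P) - (σ + c ^ 2 * P) / ν
      ≤ Real.log (1 + b ^ 2 * P / σ) := by
  have ha : 0 < 1 + a ^ 2 * P / ν := by positivity
  have hb : 0 < 1 + b ^ 2 * P / σ := by positivity
  have hlog : Real.log (1 + a ^ 2 * P / ν) - Real.log (1 + b ^ 2 * P / σ)
      ≤ (1 + a ^ 2 * P / ν) / (1 + b ^ 2 * P / σ) - 1 := by
    rw [← Real.log_div ha.ne' hb.ne']
    exact Real.log_le_sub_one_of_pos (div_pos ha hb)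
  linarith [gmi_rational_le hP hσ hν hc]

/-- Proposition 1: the GMI expression for the AWGN auxiliary model is maximized
by `h = h̃`, `ν = σ̃²`, with maximal value `log (1 + |h̃|² P / σ̃²)`. -/
theorem stmt0 (P σt : ℝ) (hP : 0 < P) (hσ : 0 < σt) (ht : ℂ) :
    (∀ (h : ℂ) (ν : ℝ), 0 < ν →
      Real.log (1 + ‖h‖ ^ 2 * P / ν)
        + (σt + ‖ht‖ ^ 2 * P) / (ν + ‖h‖ ^ 2 * P)
        - (σt + ‖ht - h‖ ^ 2 * P) / ν
      ≤ Real.log (1 + ‖ht‖ ^ 2 * P / σt)) ∧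
    (Real.log (1 + ‖ht‖ ^ 2 * P / σt)
        + (σt + ‖ht‖ ^ 2 * P) / (σt + ‖ht‖ ^ 2 * P)
        - (σt + ‖ht - ht‖ ^ 2 * P) / σt
      = Real.log (1 + ‖ht‖ ^ 2 * P / σt)) := by
  refine ⟨fun h ν hν => gmi_le_log_one_add_snr hP.le hσ hν ?_, ?_⟩
  · exact sq_le_sq.2 (by simpa using abs_norm_sub_norm_le ht h)
  · have hS : σt + ‖ht‖ ^ 2 * P ≠ 0 := by positivity
    simp [div_self hS, div_self hσ.ne']
end

section
/- Let P > 0, s > 0, σ² > 0 be real numbers and let h, y ∈ ℂ. Then ∫_ℂ (1/(πP))·exp(−|x|²/P) · [(1/(πσ²))·exp(−|y − hx|²/σ²)]^s dx = (πσ²/s)/(πσ²)^s · exp(−|y|²/(σ²/s + |h|²P)) / (π(σ²/s + |h|²P)), where the integral is with respect to Lebesgue measure on ℂ ≅ ℝ². -/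
/-!
Raising the AWGN likelihood to the power `s` only replaces the noise variance `σ²` by `σ²/s`, up
to the constant `(πσ²)^{-s}`. The exponent `a‖x‖² + b‖y - hx‖²` of the product of two Gaussians
is, after completing the square in `x`, `(a + b‖h‖²)‖x - c‖² + ab/(a + b‖h‖²) ‖y‖²`, so the
integral over `x` is a translated Gaussian integral `π / (a + b‖h‖²)`.
-/

open MeasureTheory
open ComplexConjugate

namespace Complex

theorem mul_norm_sq_add_mul_norm_sub_mul_sq {a b : ℝ} {h : ℂ} (hM : a + b * ‖h‖ ^ 2 ≠ 0)
    (x y : ℂ) :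
    a * ‖x‖ ^ 2 + b * ‖y - h * x‖ ^ 2 =
      (a + b * ‖h‖ ^ 2) * ‖x - ((b / (a + b * ‖h‖ ^ 2) : ℝ) : ℂ) * (conj h * y)‖ ^ 2
        + a * b / (a + b * ‖h‖ ^ 2) * ‖y‖ ^ 2 := by
  simp only [Complex.sq_norm, normSq_apply, sub_re, sub_im, mul_re, mul_im, ofReal_re, ofReal_im,
    conj_re, conj_im, ← sq] at hM ⊢
  field_simp
  ring

theorem integral_exp_neg_mul_norm_sub_sq {A : ℝ} (hA : 0 < A) (c : ℂ) :
    ∫ x : ℂ, Real.exp (-(A * ‖x - c‖ ^ 2)) = Real.pi / A := by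
  simpa [integral_sub_right_eq_self (fun x : ℂ ↦ Real.exp (-(A * ‖x‖ ^ 2))) c] using
    GaussianFourier.integral_rexp_neg_mul_sq_norm (V := ℂ) hA

theorem integral_exp_neg_mul_norm_sq_add_mul_norm_sub_mul_sq {a b : ℝ} {h : ℂ}
    (hM : 0 < a + b * ‖h‖ ^ 2) (y : ℂ) :
    ∫ x : ℂ, Real.exp (-(a * ‖x‖ ^ 2 + b * ‖y - h * x‖ ^ 2)) =
      Real.pi / (a + b * ‖h‖ ^ 2) * Real.exp (-(a * b / (a + b * ‖h‖ ^ 2) * ‖y‖ ^ 2)) := by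
  simp_rw [mul_norm_sq_add_mul_norm_sub_mul_sq hM.ne', neg_add, Real.exp_add]
  rw [integral_mul_const, integral_exp_neg_mul_norm_sub_sq hM]

end Complex

/-- Eq. (25): the mismatched output density `q(y) = ∫ p(x) q(y|x)^s dx` for a CSCG
input and an AWGN auxiliary model raised to the power `s`. -/
theorem stmt3 (P s σsq : ℝ) (hP : 0 < P) (hs : 0 < s) (hσ : 0 < σsq) (h y : ℂ) :
    (∫ x : ℂ, (1 / (Real.pi * P)) * Real.exp (-(‖x‖ ^ 2) / P) *
        ((1 / (Real.pi * σsq)) * Real.exp (-(‖y - h * x‖ ^ 2) / σsq)) ^ s)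
      = (Real.pi * σsq / s) / (Real.pi * σsq) ^ s *
        (Real.exp (-(‖y‖ ^ 2) / (σsq / s + ‖h‖ ^ 2 * P)) /
          (Real.pi * (σsq / s + ‖h‖ ^ 2 * P))) := by
  have hM : 0 < 1 / P + s / σsq * ‖h‖ ^ 2 := by positivity
  have hintegrand : ∀ x : ℂ,
      (1 / (Real.pi * P)) * Real.exp (-(‖x‖ ^ 2) / P) *
          ((1 / (Real.pi * σsq)) * Real.exp (-(‖y - h * x‖ ^ 2) / σsq)) ^ s =
        (1 / (Real.pi * P)) * (1 / (Real.pi * σsq)) ^ s *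
          Real.exp (-(1 / P * ‖x‖ ^ 2 + s / σsq * ‖y - h * x‖ ^ 2)) := by
    intro x
    rw [Real.mul_rpow (by positivity) (Real.exp_nonneg _), ← Real.exp_mul, neg_add,
      Real.exp_add]
    ring_nf
  simp_rw [hintegrand]
  rw [integral_const_mul, Complex.integral_exp_neg_mul_norm_sq_add_mul_norm_sub_mul_sq hM,
    Real.div_rpow zero_le_one (by positivity), Real.one_rpow]
  field_simp
end

section
/- Let m, n ≥ 1, let Q be an m×m positive-definite Hermitian complex matrix, let Q̃_Z be an n×n positive-definite Hermitian complex matrix, and let H̃ be an n×m complex matrix. Then for every n×m complex matrix H and every n×n positive-definite Hermitian complex matrix Q_Z, ln det(I + Q_Z⁻¹ H Q H†) + tr( (Q̃_Z + H̃ Q H̃†)(Q_Z + H Q H†)⁻¹ ) − tr( (Q̃_Z + (H̃ − H) Q (H̃ − H)†) Q_Z⁻¹ ) ≤ ln det(I + Q̃_Z⁻¹ H̃ Q H̃†), and equality holds when H = H̃ and Q_Z = Q̃_Z. (All the determinants and traces appearing here are positive reals.) -/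
open Matrix
open scoped ComplexOrder

/-!
With `A = QZ + H Q Hᴴ`, the model's posterior of `X` given `Y` has precision
`N = Q⁻¹ + Hᴴ QZ⁻¹ H` and mean `G Y`, `G = Q Hᴴ A⁻¹`. Bayes' rule for the Gaussian model, averaged
under the true second moments, turns the GMI into `log det N + log det Q + m - tr (N E)`, where `E`
is the true error covariance of the estimate `G Y` of `X`. This `E` dominates the LMMSE error
covariance `P = (Q⁻¹ + H̃ᴴ Q̃_Z⁻¹ H̃)⁻¹`, and `tr (N P) - log det (N P) ≥ m` because `log x ≤ x - 1`
on the eigenvalues. As `det (I + Q̃_Z⁻¹ H̃ Q H̃ᴴ) = det Q / det P`, the bound follows.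
-/

namespace Matrix

variable {m n : Type*} [Fintype n] [DecidableEq n]

lemma PosDef.re_det_pos {X : Matrix n n ℂ} (hX : X.PosDef) : 0 < X.det.re :=
  (Complex.pos_iff.1 hX.det_pos).1

lemma PosDef.re_det_mul {X : Matrix n n ℂ} (hX : X.PosDef) (z : ℂ) :
    (X.det * z).re = X.det.re * z.re := by
  rw [Complex.mul_re, ← (Complex.pos_iff.1 hX.det_pos).2, zero_mul, sub_zero]

lemma PosDef.card_add_log_re_det_le_re_trace {X : Matrix n n ℂ} (hX : X.PosDef) :
    Fintype.card n + Real.log X.det.re ≤ X.trace.re := by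
  have hpos := hX.eigenvalues_pos
  rw [hX.isHermitian.det_eq_prod_eigenvalues, hX.isHermitian.trace_eq_sum_eigenvalues]
  simp only [RCLike.ofReal_eq_complex_ofReal, ← Complex.ofReal_prod, ← Complex.ofReal_sum,
    Complex.ofReal_re]
  rw [Real.log_prod fun i _ => (hpos i).ne', ← Finset.card_univ, Finset.card_eq_sum_ones,
    Nat.cast_sum, Nat.cast_one, ← Finset.sum_add_distrib]
  gcongr with i
  linarith [Real.log_le_sub_one_of_pos (hpos i)]

open scoped MatrixOrder in
lemma PosDef.card_add_log_re_det_add_log_re_det_le_re_trace_mul {N P : Matrix n n ℂ}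
    (hN : N.PosDef) (hP : P.PosDef) :
    Fintype.card n + Real.log N.det.re + Real.log P.det.re ≤ (N * P).trace.re := by
  obtain ⟨S, hS, rfl⟩ :=
    CStarAlgebra.isStrictlyPositive_iff_eq_mul_star_self.1 hN.isStrictlyPositive
  rw [star_eq_conjTranspose] at hN ⊢
  have hX : (Sᴴ * P * S).PosDef := hP.conjTranspose_mul_mul_same (mulVec_injective_of_isUnit hS)
  have hdet : (Sᴴ * P * S).det.re = (S * Sᴴ).det.re * P.det.re := by
    rw [← hN.re_det_mul, det_mul, det_mul, det_mul]; congr 1; ring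
  have htr : (S * Sᴴ * P).trace = (Sᴴ * P * S).trace := by rw [mul_assoc, trace_mul_comm]
  rw [add_assoc, ← Real.log_mul hN.re_det_pos.ne' hP.re_det_pos.ne', ← hdet, htr]
  exact hX.card_add_log_re_det_le_re_trace

open scoped MatrixOrder in
lemma PosSemidef.re_trace_mul_le_re_trace_mul {N P E : Matrix n n ℂ} (hN : N.PosSemidef)
    (hPE : P ≤ E) : (N * P).trace.re ≤ (N * E).trace.re := by
  obtain ⟨S, rfl⟩ := CStarAlgebra.nonneg_iff_eq_mul_star_self.1 hN.nonneg
  have hK := ((le_iff.1 hPE).conjTranspose_mul_mul_same S).trace_nonneg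
  rw [star_eq_conjTranspose, ← sub_nonneg, ← Complex.sub_re, ← trace_sub, ← Matrix.mul_sub,
    Matrix.mul_assoc, trace_mul_comm, Matrix.mul_assoc]
  simpa only [Matrix.mul_assoc] using (Complex.nonneg_iff.1 hK).1

lemma PosDef.log_re_det_inv {X : Matrix n n ℂ} (hX : X.PosDef) :
    Real.log X⁻¹.det.re = -Real.log X.det.re := by
  have h : X.det.re * X⁻¹.det.re = 1 := by
    rw [← hX.re_det_mul, ← det_mul, mul_nonsing_inv _ hX.det_pos.ne'.isUnit, det_one,
      Complex.one_re]
  rw [eq_neg_iff_add_eq_zero, ← Real.log_mul hX.inv.re_det_pos.ne' hX.re_det_pos.ne', mul_comm, h,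
    Real.log_one]

lemma det_one_add_mul_eq_det_inv_add_mul_mul_det {α : Type*} [CommRing α] [Fintype m]
    [DecidableEq m] {Q : Matrix m m α} (hQ : IsUnit Q.det) (W : Matrix n n α) (H : Matrix n m α)
    (V : Matrix m n α) : (1 + W * (H * Q * V)).det = (Q⁻¹ + V * W * H).det * Q.det := by
  have : (Q⁻¹ + V * W * H) * Q = 1 + V * (W * H * Q) := by
    rw [Matrix.add_mul, nonsing_inv_mul _ hQ, Matrix.mul_assoc V, Matrix.mul_assoc V]
  rw [← det_mul, this, det_one_add_mul_comm V]
  simp only [Matrix.mul_assoc]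

lemma log_re_det_one_add_eq [Fintype m] [DecidableEq m] {Q : Matrix m m ℂ} {QZ : Matrix n n ℂ}
    (hQ : Q.PosDef) (hQZ : QZ.PosDef) (H : Matrix n m ℂ) :
    Real.log (1 + QZ⁻¹ * (H * Q * Hᴴ)).det.re
      = Real.log (Q⁻¹ + Hᴴ * QZ⁻¹ * H).det.re + Real.log Q.det.re := by
  have hN : (Q⁻¹ + Hᴴ * QZ⁻¹ * H).PosDef :=
    hQ.inv.add_posSemidef (hQZ.inv.posSemidef.conjTranspose_mul_mul_same H)
  rw [det_one_add_mul_eq_det_inv_add_mul_mul_det hQ.det_pos.ne'.isUnit, hN.re_det_mul,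
    Real.log_mul hN.re_det_pos.ne' hQ.re_det_pos.ne']

lemma push_through_inv_add {α : Type*} [CommRing α] [Fintype m] [DecidableEq m]
    {Q : Matrix m m α} {QZ : Matrix n n α} (hQ : IsUnit Q.det) (hQZ : IsUnit QZ.det)
    (H : Matrix n m α) (V : Matrix m n α) (hA : IsUnit (QZ + H * Q * V).det) :
    (Q⁻¹ + V * QZ⁻¹ * H) * (Q * V * (QZ + H * Q * V)⁻¹) = V * QZ⁻¹ := by
  have h : (Q⁻¹ + V * QZ⁻¹ * H) * Q * V = V * QZ⁻¹ * (QZ + H * Q * V) := by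
    simp only [Matrix.add_mul, Matrix.mul_add, Matrix.mul_assoc, nonsing_inv_mul_cancel_left _ _ hQ,
      nonsing_inv_mul _ hQZ, Matrix.mul_one]
  rw [← Matrix.mul_assoc, ← Matrix.mul_assoc, h, mul_nonsing_inv_cancel_right _ _ hA]

end Matrix

section

variable {m n : Type*} [Fintype n] [DecidableEq n]

/-- The error covariance `E[(X - L Y)(X - L Y)ᴴ]` of the linear estimate `L Y` of `X`, when
`E[X Xᴴ] = Q`, `E[Y Xᴴ] = R` and `E[Y Yᴴ] = B`. -/
def errorCov (Q : Matrix m m ℂ) (R : Matrix n m ℂ) (B : Matrix n n ℂ) (L : Matrix m n ℂ) :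
    Matrix m m ℂ :=
  Q - L * R - Rᴴ * Lᴴ + L * B * Lᴴ

lemma errorCov_eq_add {B : Matrix n n ℂ} (hB : B.IsHermitian) (hBu : IsUnit B.det)
    (Q : Matrix m m ℂ) (R : Matrix n m ℂ) (L : Matrix m n ℂ) :
    errorCov Q R B L = Q - Rᴴ * B⁻¹ * R + (L - Rᴴ * B⁻¹) * B * (L - Rᴴ * B⁻¹)ᴴ := by
  simp only [errorCov, conjTranspose_sub, conjTranspose_mul, conjTranspose_conjTranspose,
    hB.inv.eq]
  simp only [Matrix.sub_mul, Matrix.mul_sub, Matrix.mul_assoc, mul_nonsing_inv_cancel_left _ _ hBu,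
    nonsing_inv_mul_cancel_left _ _ hBu]
  abel

/-- Bayes' rule `q(y|x) q(x) = q(x|y) q(y)` for the Gaussian model `Y = H X + Z`, with the quadratic
forms averaged under arbitrary true second moments `Q`, `R`, `B`. -/
lemma trace_mul_errorCov_add_card [Fintype m] [DecidableEq m] {Q : Matrix m m ℂ}
    {QZ : Matrix n n ℂ} (hQ : Q.PosDef) (hQZ : QZ.PosDef) (R : Matrix n m ℂ) (B : Matrix n n ℂ)
    (H : Matrix n m ℂ) :
    (errorCov B Rᴴ Q H * QZ⁻¹).trace + Fintype.card m =
      ((Q⁻¹ + Hᴴ * QZ⁻¹ * H) * errorCov Q R B (Q * Hᴴ * (QZ + H * Q * Hᴴ)⁻¹)).trace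
        + (B * (QZ + H * Q * Hᴴ)⁻¹).trace := by
  set A := QZ + H * Q * Hᴴ
  set N := Q⁻¹ + Hᴴ * QZ⁻¹ * H
  set G := Q * Hᴴ * A⁻¹
  have hA : A.PosDef := hQZ.add_posSemidef (hQ.posSemidef.mul_mul_conjTranspose_same H)
  have hAu : IsUnit A.det := hA.det_pos.ne'.isUnit
  have hQu : IsUnit Q.det := hQ.det_pos.ne'.isUnit
  have hQZu : IsUnit QZ.det := hQZ.det_pos.ne'.isUnit
  have hN : Nᴴ = N :=
    (hQ.inv.add_posSemidef (hQZ.inv.posSemidef.conjTranspose_mul_mul_same H)).isHermitian.eq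
  have hNG : N * G = Hᴴ * QZ⁻¹ := push_through_inv_add hQu hQZu H Hᴴ hAu
  have hGN : Gᴴ * N = QZ⁻¹ * H := by
    rw [← hN, ← conjTranspose_mul, hNG, conjTranspose_mul, hQZ.isHermitian.inv.eq,
      conjTranspose_conjTranspose]
  have hGh : Gᴴ = A⁻¹ * H * Q := by
    simp only [G, conjTranspose_mul, hA.isHermitian.inv.eq, hQ.isHermitian.eq,
      conjTranspose_conjTranspose, Matrix.mul_assoc]
  have hAHQH : A⁻¹ * (H * Q * Hᴴ) * QZ⁻¹ = QZ⁻¹ - A⁻¹ := by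
    rw [show H * Q * Hᴴ = A - QZ by simp only [A, add_sub_cancel_left], Matrix.mul_sub,
      nonsing_inv_mul _ hAu, Matrix.sub_mul, Matrix.one_mul, mul_nonsing_inv_cancel_right QZ _ hQZu]
  have hTrNQ : (N * Q).trace = Fintype.card m + (QZ⁻¹ * (H * Q * Hᴴ)).trace := by
    rw [add_mul, nonsing_inv_mul _ hQu, trace_add, trace_one, Matrix.mul_assoc, Matrix.mul_assoc,
      trace_mul_comm]
    simp only [Matrix.mul_assoc]
  have hTrNGR : (N * G * R).trace = (QZ⁻¹ * (R * Hᴴ)).trace := by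
    rw [hNG, Matrix.mul_assoc, trace_mul_comm, Matrix.mul_assoc]
  have hTrNRG : (N * Rᴴ * Gᴴ).trace = (QZ⁻¹ * (H * Rᴴ)).trace := by
    rw [trace_mul_comm, ← Matrix.mul_assoc, hGN, Matrix.mul_assoc]
  have hTrNGBG : (N * G * B * Gᴴ).trace = (QZ⁻¹ * B).trace - (A⁻¹ * B).trace := by
    calc (N * G * B * Gᴴ).trace = (Hᴴ * (QZ⁻¹ * B * A⁻¹ * H * Q)).trace := by
          simp only [hNG, hGh, Matrix.mul_assoc]
      _ = (QZ⁻¹ * (B * (A⁻¹ * (H * Q * Hᴴ)))).trace := by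
          rw [trace_mul_comm]; simp only [Matrix.mul_assoc]
      _ = (B * (A⁻¹ * (H * Q * Hᴴ) * QZ⁻¹)).trace := by
          rw [trace_mul_comm]; simp only [Matrix.mul_assoc]
      _ = (QZ⁻¹ * B).trace - (A⁻¹ * B).trace := by
          rw [hAHQH, Matrix.mul_sub, trace_sub, trace_mul_comm B, trace_mul_comm B]
  have hexp : N * errorCov Q R B G = N * Q - N * G * R - N * Rᴴ * Gᴴ + N * G * B * Gᴴ := by
    simp only [errorCov, Matrix.mul_sub, Matrix.mul_add, Matrix.mul_assoc]
  rw [hexp, trace_mul_comm _ QZ⁻¹, trace_mul_comm B]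
  simp only [errorCov, conjTranspose_conjTranspose, Matrix.mul_add, Matrix.mul_sub, trace_add,
    trace_sub, hTrNQ, hTrNGR, hTrNRG, hTrNGBG]
  ring

open scoped MatrixOrder in
/-- By Woodbury the left side is the error covariance of the LMMSE gain `(H Q)ᴴ (QZ + H Q Hᴴ)⁻¹`,
which is minimal by completing the square. -/
lemma inv_add_le_errorCov [Fintype m] [DecidableEq m] {Q : Matrix m m ℂ} {QZ : Matrix n n ℂ}
    (hQ : Q.PosDef) (hQZ : QZ.PosDef) (H : Matrix n m ℂ) (L : Matrix m n ℂ) :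
    (Q⁻¹ + Hᴴ * QZ⁻¹ * H)⁻¹ ≤ errorCov Q (H * Q) (QZ + H * Q * Hᴴ) L := by
  have hB : (QZ + H * Q * Hᴴ).PosDef :=
    hQZ.add_posSemidef (hQ.posSemidef.mul_mul_conjTranspose_same H)
  have hQu := hQ.det_pos.ne'.isUnit
  have hWoodbury : (Q⁻¹ + Hᴴ * QZ⁻¹ * H)⁻¹ = Q - (H * Q)ᴴ * (QZ + H * Q * Hᴴ)⁻¹ * (H * Q) := by
    rw [add_mul_mul_inv_eq_sub _ _ _ _ (isUnit_nonsing_inv_iff.2 hQ.isUnit)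
      (isUnit_nonsing_inv_iff.2 hQZ.isUnit), nonsing_inv_nonsing_inv _ hQu,
      nonsing_inv_nonsing_inv _ hQZ.det_pos.ne'.isUnit]
    · simp only [conjTranspose_mul, hQ.isHermitian.eq, Matrix.mul_assoc]
    · rw [nonsing_inv_nonsing_inv _ hQu, nonsing_inv_nonsing_inv _ hQZ.det_pos.ne'.isUnit]
      exact hB.isUnit
  rw [le_iff, errorCov_eq_add hB.isHermitian hB.det_pos.ne'.isUnit, hWoodbury, add_sub_cancel_left]
  exact hB.posSemidef.mul_mul_conjTranspose_same _

theorem gmi_le_log_re_det_one_add [Fintype m] [DecidableEq m] {Q : Matrix m m ℂ}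
    {QZt : Matrix n n ℂ} (hQ : Q.PosDef) (hQZt : QZt.PosDef) (Ht H : Matrix n m ℂ)
    {QZ : Matrix n n ℂ} (hQZ : QZ.PosDef) :
    Real.log (1 + QZ⁻¹ * (H * Q * Hᴴ)).det.re
        + ((QZt + Ht * Q * Htᴴ) * (QZ + H * Q * Hᴴ)⁻¹).trace.re
        - ((QZt + (Ht - H) * Q * (Ht - H)ᴴ) * QZ⁻¹).trace.re
      ≤ Real.log (1 + QZt⁻¹ * (Ht * Q * Htᴴ)).det.re := by
  set B := QZt + Ht * Q * Htᴴ
  set N := Q⁻¹ + Hᴴ * QZ⁻¹ * H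
  set N₁ := Q⁻¹ + Htᴴ * QZt⁻¹ * Ht
  have hN : N.PosDef := hQ.inv.add_posSemidef (hQZ.inv.posSemidef.conjTranspose_mul_mul_same H)
  have hN₁ : N₁.PosDef :=
    hQ.inv.add_posSemidef (hQZt.inv.posSemidef.conjTranspose_mul_mul_same Ht)
  have hC : QZt + (Ht - H) * Q * (Ht - H)ᴴ = errorCov B (Ht * Q)ᴴ Q H := by
    simp only [B, errorCov, conjTranspose_conjTranspose, conjTranspose_sub, Matrix.sub_mul,
      Matrix.mul_sub, conjTranspose_mul, hQ.isHermitian.eq, Matrix.mul_assoc]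
    abel
  have hBayes := congrArg Complex.re (trace_mul_errorCov_add_card hQ hQZ (Ht * Q) B H)
  simp only [Complex.add_re, Complex.natCast_re] at hBayes
  have hMMSE := hN.posSemidef.re_trace_mul_le_re_trace_mul
    (inv_add_le_errorCov hQ hQZt Ht (Q * Hᴴ * (QZ + H * Q * Hᴴ)⁻¹))
  have hGibbs := hN.card_add_log_re_det_add_log_re_det_le_re_trace_mul hN₁.inv
  rw [log_re_det_one_add_eq hQ hQZ, log_re_det_one_add_eq hQ hQZt, hC]
  rw [hN₁.log_re_det_inv] at hGibbs
  linarith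

end

theorem stmt5_general {m n : ℕ}
    (Q : Matrix (Fin m) (Fin m) ℂ) (hQ : Q.PosDef)
    (QZt : Matrix (Fin n) (Fin n) ℂ) (hQZt : QZt.PosDef)
    (Ht : Matrix (Fin n) (Fin m) ℂ) :
    (∀ (H : Matrix (Fin n) (Fin m) ℂ) (QZ : Matrix (Fin n) (Fin n) ℂ), QZ.PosDef →
      Real.log (((1 : Matrix (Fin n) (Fin n) ℂ) + QZ⁻¹ * (H * Q * H.conjTranspose)).det.re)
        + (((QZt + Ht * Q * Ht.conjTranspose) * (QZ + H * Q * H.conjTranspose)⁻¹).trace).re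
        - (((QZt + (Ht - H) * Q * (Ht - H).conjTranspose) * QZ⁻¹).trace).re
      ≤ Real.log
          (((1 : Matrix (Fin n) (Fin n) ℂ) + QZt⁻¹ * (Ht * Q * Ht.conjTranspose)).det.re)) ∧
    (Real.log (((1 : Matrix (Fin n) (Fin n) ℂ) + QZt⁻¹ * (Ht * Q * Ht.conjTranspose)).det.re)
        + (((QZt + Ht * Q * Ht.conjTranspose) * (QZt + Ht * Q * Ht.conjTranspose)⁻¹).trace).re
        - (((QZt + (Ht - Ht) * Q * (Ht - Ht).conjTranspose) * QZt⁻¹).trace).re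
      = Real.log
          (((1 : Matrix (Fin n) (Fin n) ℂ) + QZt⁻¹ * (Ht * Q * Ht.conjTranspose)).det.re)) := by
  refine ⟨fun H QZ hQZ => gmi_le_log_re_det_one_add hQ hQZt Ht H hQZ, ?_⟩
  have hB : (QZt + Ht * Q * Htᴴ).PosDef :=
    hQZt.add_posSemidef (hQ.posSemidef.mul_mul_conjTranspose_same Ht)
  rw [mul_nonsing_inv _ hB.det_pos.ne'.isUnit, sub_self, Matrix.zero_mul, Matrix.zero_mul,
    add_zero, mul_nonsing_inv _ hQZt.det_pos.ne'.isUnit, add_sub_cancel_right]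

/-- Lemma 2: the matrix GMI expression is maximized by `H = H̃`, `Q_Z = Q̃_Z`,
with maximal value `log det (I + Q̃_Z⁻¹ H̃ Q H̃†)`. -/
theorem stmt5 {m n : ℕ} (hm : 1 ≤ m) (hn : 1 ≤ n)
    (Q : Matrix (Fin m) (Fin m) ℂ) (hQ : Q.PosDef)
    (QZt : Matrix (Fin n) (Fin n) ℂ) (hQZt : QZt.PosDef)
    (Ht : Matrix (Fin n) (Fin m) ℂ) :
    (∀ (H : Matrix (Fin n) (Fin m) ℂ) (QZ : Matrix (Fin n) (Fin n) ℂ), QZ.PosDef →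
      Real.log (((1 : Matrix (Fin n) (Fin n) ℂ) + QZ⁻¹ * (H * Q * H.conjTranspose)).det.re)
        + (((QZt + Ht * Q * Ht.conjTranspose) * (QZ + H * Q * H.conjTranspose)⁻¹).trace).re
        - (((QZt + (Ht - H) * Q * (Ht - H).conjTranspose) * QZ⁻¹).trace).re
      ≤ Real.log
          (((1 : Matrix (Fin n) (Fin n) ℂ) + QZt⁻¹ * (Ht * Q * Ht.conjTranspose)).det.re)) ∧
    (Real.log (((1 : Matrix (Fin n) (Fin n) ℂ) + QZt⁻¹ * (Ht * Q * Ht.conjTranspose)).det.re)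
        + (((QZt + Ht * Q * Ht.conjTranspose) * (QZt + Ht * Q * Ht.conjTranspose)⁻¹).trace).re
        - (((QZt + (Ht - Ht) * Q * (Ht - Ht).conjTranspose) * QZt⁻¹).trace).re
      = Real.log
          (((1 : Matrix (Fin n) (Fin n) ℂ) + QZt⁻¹ * (Ht * Q * Ht.conjTranspose)).det.re)) :=
  stmt5_general Q hQ QZt hQZt Ht
end

section
/- Let 0 ≤ ε ≤ 1/2 and P > 0. Define F : [0, 2P] → ℝ by F(x) = (ε/2)·ln(1 + 2x) + ((1 − ε)/2)·ln(1 + 2(2P − x)). Then F attains its maximum over [0, 2P] exactly at x₀ = max(0, 2εP − (1 − 2ε)/2). -/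
/-- Optimal power allocation (eq. (129)): `F(x) = (ε/2) log(1+2x) + ((1-ε)/2) log(1+2(2P-x))`
attains its maximum over `[0, 2P]` exactly at `x₀ = max 0 (2εP - (1-2ε)/2)`. -/
theorem stmt10 (ε P : ℝ) (hε0 : 0 ≤ ε) (hε : ε ≤ 1 / 2) (hP : 0 < P) :
    (max 0 (2 * ε * P - (1 - 2 * ε) / 2) ∈ Set.Icc (0 : ℝ) (2 * P)) ∧
    (∀ x ∈ Set.Icc (0 : ℝ) (2 * P),
      (ε / 2) * Real.log (1 + 2 * x) + ((1 - ε) / 2) * Real.log (1 + 2 * (2 * P - x))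
        ≤ (ε / 2) * Real.log (1 + 2 * max 0 (2 * ε * P - (1 - 2 * ε) / 2))
          + ((1 - ε) / 2) *
            Real.log (1 + 2 * (2 * P - max 0 (2 * ε * P - (1 - 2 * ε) / 2)))) ∧
    (∀ x ∈ Set.Icc (0 : ℝ) (2 * P),
      (ε / 2) * Real.log (1 + 2 * x) + ((1 - ε) / 2) * Real.log (1 + 2 * (2 * P - x))
        = (ε / 2) * Real.log (1 + 2 * max 0 (2 * ε * P - (1 - 2 * ε) / 2))
          + ((1 - ε) / 2) *
            Real.log (1 + 2 * (2 * P - max 0 (2 * ε * P - (1 - 2 * ε) / 2)))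
        → x = max 0 (2 * ε * P - (1 - 2 * ε) / 2)) := by
  set x₀ := max 0 (2 * ε * P - (1 - 2 * ε) / 2) with hx₀def
  have hε1 : ε < 1 := lt_of_le_of_lt hε (by norm_num)
  have hx₀0 : 0 ≤ x₀ := le_max_left _ _
  have hx₀2 : x₀ ≤ 2 * P := by
    apply max_le (by linarith)
    nlinarith
  have hA₀ : (0:ℝ) < 1 + 2 * x₀ := by linarith
  have hB₀ : (0:ℝ) < 1 + 2 * (2 * P - x₀) := by linarith
  have key : ∀ x, 0 ≤ x → x ≤ 2 * P → x ≠ x₀ →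
      (ε / 2) * Real.log (1 + 2 * x) + ((1 - ε) / 2) * Real.log (1 + 2 * (2 * P - x))
        < (ε / 2) * Real.log (1 + 2 * x₀) + ((1 - ε) / 2) * Real.log (1 + 2 * (2 * P - x₀)) := by
    intro x hx0 hx2 hne
    have hA : (0:ℝ) < 1 + 2 * x := by linarith
    have hB : (0:ℝ) < 1 + 2 * (2 * P - x) := by linarith
    have hg : (x - x₀) * (ε / (1 + 2 * x₀) - (1 - ε) / (1 + 2 * (2 * P - x₀))) ≤ 0 := by
      rcases le_or_gt (2 * ε * P - (1 - 2 * ε) / 2) 0 with h | h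
      · have hx₀ : x₀ = 0 := max_eq_left h
        rw [hx₀]
        apply mul_nonpos_of_nonneg_of_nonpos (by linarith)
        have h14 : (0:ℝ) < 1 + 2 * (2 * P - 0) := by linarith
        rw [sub_nonpos, div_le_div_iff₀ (by norm_num) h14]
        nlinarith
      · have hεpos : 0 < ε := by nlinarith
        have hx₀ : x₀ = 2 * ε * P - (1 - 2 * ε) / 2 := max_eq_right h.le
        have hz : ε / (1 + 2 * x₀) - (1 - ε) / (1 + 2 * (2 * P - x₀)) = 0 := by
          rw [sub_eq_zero, div_eq_div_iff hA₀.ne' hB₀.ne', hx₀]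
          ring
        rw [hz, mul_zero]
    have h1 : Real.log (1 + 2 * x) - Real.log (1 + 2 * x₀)
        ≤ (1 + 2 * x) / (1 + 2 * x₀) - 1 := by
      rw [← Real.log_div hA.ne' hA₀.ne']
      exact Real.log_le_sub_one_of_pos (div_pos hA hA₀)
    have hBne : (1 + 2 * (2 * P - x)) / (1 + 2 * (2 * P - x₀)) ≠ 1 := by
      intro h
      have := (div_eq_one_iff_eq hB₀.ne').mp h
      exact hne (by linarith)
    have h2 : Real.log (1 + 2 * (2 * P - x)) - Real.log (1 + 2 * (2 * P - x₀))
        < (1 + 2 * (2 * P - x)) / (1 + 2 * (2 * P - x₀)) - 1 := by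
      rw [← Real.log_div hB.ne' hB₀.ne']
      exact Real.log_lt_sub_one_of_pos (div_pos hB hB₀) hBne
    have hid : (ε / 2) * ((1 + 2 * x) / (1 + 2 * x₀) - 1)
        + ((1 - ε) / 2) * ((1 + 2 * (2 * P - x)) / (1 + 2 * (2 * P - x₀)) - 1)
        = (x - x₀) * (ε / (1 + 2 * x₀) - (1 - ε) / (1 + 2 * (2 * P - x₀))) := by
      field_simp
      ring
    have c1 : 0 ≤ ε / 2 := by linarith
    have c2 : 0 < (1 - ε) / 2 := by linarith
    nlinarith [mul_le_mul_of_nonneg_left h1 c1, (mul_lt_mul_iff_right₀ c2).mpr h2]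
  refine ⟨⟨hx₀0, hx₀2⟩, ?_, ?_⟩
  · intro x hx
    rcases eq_or_ne x x₀ with h | h
    · rw [h]
    · exact (key x hx.1 hx.2 h).le
  · intro x hx heq
    by_contra h
    exact absurd heq (ne_of_lt (key x hx.1 hx.2 h))
end

section
/- Let L > 0 and 0 ≤ D < L be real numbers and let P > 0. Consider maximizing G(P₁, P₂) = (D/(2L))·ln(1 + 2P₁) + ((L − D)/(2L))·ln(1 + 2P₂) over P₁ ≥ 0, P₂ ≥ 0 subject to D·P₁ + ((L − D)/2)·P₂ ≤ L·P. If P ≥ (L − D)/(4L), the maximum is attained at P₁ = P − (L − D)/(4L) and P₂ = 2P + D/(2L); if P < (L − D)/(4L), the maximum is attained at P₁ = 0 and P₂ = 2LP/(L − D). -/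
lemma log_tangent (x y : ℝ) (hx : 0 < x) (hy : 0 < y) :
    Real.log x ≤ Real.log y + (x - y) / y := by
  have h := Real.log_le_sub_one_of_pos (x := x / y) (by positivity)
  rw [Real.log_div hx.ne' hy.ne'] at h
  have : x / y - 1 = (x - y) / y := by field_simp
  linarith [this ▸ h]

/-- Power optimization of Sec. VIII-E: maximize
`G(P₁,P₂) = (D/(2L)) log(1+2P₁) + ((L-D)/(2L)) log(1+2P₂)` subject to
`P₁, P₂ ≥ 0` and `D P₁ + ((L-D)/2) P₂ ≤ L P`. -/
theorem stmt12 (L D P : ℝ) (hL : 0 < L) (hD0 : 0 ≤ D) (hDL : D < L) (hP : 0 < P) :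
    ((L - D) / (4 * L) ≤ P →
      (0 ≤ P - (L - D) / (4 * L) ∧ 0 ≤ 2 * P + D / (2 * L) ∧
        D * (P - (L - D) / (4 * L)) + (L - D) / 2 * (2 * P + D / (2 * L)) ≤ L * P ∧
        ∀ Q₁ Q₂ : ℝ, 0 ≤ Q₁ → 0 ≤ Q₂ → D * Q₁ + (L - D) / 2 * Q₂ ≤ L * P →
          (D / (2 * L)) * Real.log (1 + 2 * Q₁)
              + ((L - D) / (2 * L)) * Real.log (1 + 2 * Q₂)
            ≤ (D / (2 * L)) * Real.log (1 + 2 * (P - (L - D) / (4 * L)))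
              + ((L - D) / (2 * L)) * Real.log (1 + 2 * (2 * P + D / (2 * L))))) ∧
    (P < (L - D) / (4 * L) →
      (0 ≤ 2 * L * P / (L - D) ∧
        D * 0 + (L - D) / 2 * (2 * L * P / (L - D)) ≤ L * P ∧
        ∀ Q₁ Q₂ : ℝ, 0 ≤ Q₁ → 0 ≤ Q₂ → D * Q₁ + (L - D) / 2 * Q₂ ≤ L * P →
          (D / (2 * L)) * Real.log (1 + 2 * Q₁)
              + ((L - D) / (2 * L)) * Real.log (1 + 2 * Q₂)
            ≤ (D / (2 * L)) * Real.log (1 + 2 * (0 : ℝ))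
              + ((L - D) / (2 * L)) * Real.log (1 + 2 * (2 * L * P / (L - D))))) := by
  have hLD : 0 < L - D := by linarith
  have hL0 : (L:ℝ) ≠ 0 := hL.ne'
  have hLD0 : (L - D) ≠ 0 := hLD.ne'
  have hA : (0:ℝ) ≤ D / (2 * L) := by positivity
  have hB : (0:ℝ) ≤ (L - D) / (2 * L) := by positivity
  constructor
  · intro hge
    refine ⟨by linarith, by positivity, le_of_eq (by field_simp; ring), ?_⟩
    intro Q₁ Q₂ hQ1 hQ2 hcon
    set c : ℝ := 2 * P + (L + D) / (2 * L) with hc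
    have hcpos : 0 < c := by rw [hc]; positivity
    have e1 : 1 + 2 * (P - (L - D) / (4 * L)) = c := by rw [hc]; field_simp; ring
    have e2 : 1 + 2 * (2 * P + D / (2 * L)) = 2 * c := by rw [hc]; field_simp; ring
    have hLc : L * c = 2 * L * P + (L + D) / 2 := by rw [hc]; field_simp
    rw [e1, e2]
    clear_value c
    have hx1 : (0:ℝ) < 1 + 2 * Q₁ := by linarith
    have hx2 : (0:ℝ) < 1 + 2 * Q₂ := by linarith
    have l1 := mul_le_mul_of_nonneg_left (log_tangent (1 + 2 * Q₁) c hx1 hcpos) hA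
    have l2 := mul_le_mul_of_nonneg_left
      (log_tangent (1 + 2 * Q₂) (2 * c) hx2 (by positivity)) hB
    rw [mul_add] at l1 l2
    have key : D * (1 + 2 * Q₁ - c) + (L - D) / 2 * (1 + 2 * Q₂ - 2 * c) ≤ 0 := by
      nlinarith [hcon, hLc]
    have hres : D / (2 * L) * ((1 + 2 * Q₁ - c) / c)
        + (L - D) / (2 * L) * ((1 + 2 * Q₂ - 2 * c) / (2 * c)) ≤ 0 := by
      have e : D / (2 * L) * ((1 + 2 * Q₁ - c) / c)
          + (L - D) / (2 * L) * ((1 + 2 * Q₂ - 2 * c) / (2 * c))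
          = (D * (1 + 2 * Q₁ - c) + (L - D) / 2 * (1 + 2 * Q₂ - 2 * c)) / (2 * L * c) := by
        field_simp
      rw [e]
      exact div_nonpos_of_nonpos_of_nonneg key (by positivity)
    linarith
  · intro hlt
    refine ⟨by positivity, le_of_eq (by field_simp; ring), ?_⟩
    intro Q₁ Q₂ hQ1 hQ2 hcon
    set s : ℝ := 2 * L * P / (L - D) with hs
    have hspos : 0 < s := by rw [hs]; positivity
    have hLDs : (L - D) * s = 2 * L * P := by rw [hs]; field_simp
    set t : ℝ := 1 + 2 * s with ht
    have h1 : (1:ℝ) ≤ t := by rw [ht]; linarith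
    have ht2 : t ≤ 2 := by
      have h4 : P * (4 * L) < L - D := (lt_div_iff₀ (by positivity)).mp hlt
      rw [ht]; nlinarith [hLDs]
    have ht0 : (0:ℝ) < t := by linarith
    have key1 : (L - D) * (1 + 2 * Q₂ - t) ≤ -(4 * D * Q₁) := by
      have h2 : 1 + 2 * Q₂ - t = 2 * (Q₂ - s) := by rw [ht]; ring
      nlinarith [hcon, hLDs, h2]
    rw [show (1:ℝ) + 2 * (0:ℝ) = 1 by norm_num, Real.log_one, mul_zero, zero_add]
    clear_value s t
    clear hs hLDs hspos hlt
    have hx1 : (0:ℝ) < 1 + 2 * Q₁ := by linarith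
    have hx2 : (0:ℝ) < 1 + 2 * Q₂ := by linarith
    have l1 : Real.log (1 + 2 * Q₁) ≤ 2 * Q₁ := by
      have := Real.log_le_sub_one_of_pos hx1
      linarith
    have l1' := mul_le_mul_of_nonneg_left l1 hA
    have l2 := mul_le_mul_of_nonneg_left (log_tangent (1 + 2 * Q₂) t hx2 ht0) hB
    rw [mul_add] at l2
    have hres : D / (2 * L) * (2 * Q₁)
        + (L - D) / (2 * L) * ((1 + 2 * Q₂ - t) / t) ≤ 0 := by
      have e : D / (2 * L) * (2 * Q₁) + (L - D) / (2 * L) * ((1 + 2 * Q₂ - t) / t)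
          = (2 * D * Q₁ * t + (L - D) * (1 + 2 * Q₂ - t)) / (2 * L * t) := by
        field_simp
      rw [e]
      apply div_nonpos_of_nonpos_of_nonneg _ (by positivity)
      nlinarith [key1, mul_nonneg (mul_nonneg hD0 hQ1) (by linarith : (0:ℝ) ≤ 2 - t)]
    rw [ht] at l2 hres ⊢
    linarith
end

section
/- Fix λ ∈ (0,1) and b ∈ ℝ, and for P > 0 define t(P) = P^λ + b, p(P) = (1/2)·e^{−t(P)} + (1/2)·e^{−t(P)/(2P+1)}, and m(P) = [ e^{−t(P)}·(t(P) + 1) + e^{−t(P)/(2P+1)}·(t(P) + 1 + 2P) ] / (2·p(P)). Then lim_{P→∞} p(P) = 1/2 and lim_{P→∞} m(P)/(1 + 2P) = 1. -/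
/-!
Conditioned on `H`, `|Y|²` is exponential with mean `1` or `1 + 2P`, so with `A = e^{-t}` and
`B = e^{-t/(2P+1)}` one has `2p = A + B` and
`m/(1+2P) = (A (t+1)/(1+2P) + B (1 + t/(2P+1))) / (A + B)`.
A threshold `t → ∞` with `t = o(P)` sends `A → 0`, `A (t+1) → 0` and `t/(2P+1) → 0`, hence
`B → 1`, `2p → 1` and `m/(1+2P) → 1`; `t = P^λ + b` with `0 < λ < 1` is such a threshold.
-/

open Filter Topology Asymptotics Real

/-- `Pr[|Y|² ≥ t]` and `E[|Y|² | |Y|² ≥ t]` at threshold `t P`, for `|Y|²` an equal mixture of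
exponential laws with means `1` (`H = 0`) and `2P + 1` (`H = √2`). -/
noncomputable def onOffTailProb (t : ℝ → ℝ) (P : ℝ) : ℝ :=
  (1 / 2) * exp (-t P) + (1 / 2) * exp (-t P / (2 * P + 1))

noncomputable def onOffTailMean (t : ℝ → ℝ) (P : ℝ) : ℝ :=
  (exp (-t P) * (t P + 1) + exp (-t P / (2 * P + 1)) * (t P + 1 + 2 * P))
    / (2 * onOffTailProb t P)

lemma isLittleO_rpow_add_const_id {lam : ℝ} (hlam : lam < 1) (b : ℝ) :
    (fun P : ℝ => P ^ lam + b) =o[atTop] id := by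
  refine IsLittleO.add ?_ (isLittleO_const_id_atTop b)
  refine (isLittleO_iff_tendsto' ((eventually_ne_atTop 0).mono
    fun P hP hP0 => absurd hP0 hP)).2 ?_
  refine (tendsto_rpow_neg_atTop (sub_pos.2 hlam)).congr' ?_
  filter_upwards [eventually_gt_atTop 0] with P hP
  rw [neg_sub, Real.rpow_sub hP, Real.rpow_one]

lemma isBigO_id_two_mul_add_one : (id : ℝ → ℝ) =O[atTop] fun P => 2 * P + 1 := by
  refine IsBigO.of_bound 1 ?_
  filter_upwards [eventually_ge_atTop 0] with P hP
  rw [id_eq, norm_of_nonneg hP, norm_of_nonneg (by linarith)]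
  linarith

lemma tendsto_exp_neg_mul_add_one_atTop :
    Tendsto (fun x : ℝ => exp (-x) * (x + 1)) atTop (𝓝 0) := by
  have h := (tendsto_pow_mul_exp_neg_atTop_nhds_zero 1).add tendsto_exp_neg_atTop_nhds_zero
  rw [add_zero] at h
  exact h.congr fun x => by ring

section Threshold

variable {t : ℝ → ℝ}

lemma tendsto_div_two_mul_add_one_of_isLittleO (hsub : t =o[atTop] id) :
    Tendsto (fun P => t P / (2 * P + 1)) atTop (𝓝 0) :=
  (hsub.trans_isBigO isBigO_id_two_mul_add_one).tendsto_div_nhds_zero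

lemma tendsto_exp_neg_div_two_mul_add_one (hsub : t =o[atTop] id) :
    Tendsto (fun P => exp (-t P / (2 * P + 1))) atTop (𝓝 1) := by
  simpa only [Function.comp_def, neg_div, neg_zero, exp_zero] using
    (continuous_exp.tendsto (-0)).comp (tendsto_div_two_mul_add_one_of_isLittleO hsub).neg

theorem tendsto_onOffTailProb (ht : Tendsto t atTop atTop) (hsub : t =o[atTop] id) :
    Tendsto (onOffTailProb t) atTop (𝓝 (1 / 2)) := by
  have hA := tendsto_exp_neg_atTop_nhds_zero.comp ht
  have hB := tendsto_exp_neg_div_two_mul_add_one hsub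
  have h := (hA.const_mul (1 / 2)).add (hB.const_mul (1 / 2))
  rwa [mul_zero, mul_one, zero_add] at h

lemma onOffTailMean_div_eq {P : ℝ} (hP : 0 ≤ P) :
    onOffTailMean t P / (1 + 2 * P) =
      (exp (-t P) * (t P + 1) / (1 + 2 * P)
          + exp (-t P / (2 * P + 1)) * (1 + t P / (2 * P + 1)))
        / (exp (-t P) + exp (-t P / (2 * P + 1))) := by
  have h1 : 1 + 2 * P ≠ 0 := by linarith
  have h2 : 2 * P + 1 ≠ 0 := by linarith
  have hsum : exp (-t P) + exp (-t P / (2 * P + 1)) ≠ 0 := by positivity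
  unfold onOffTailMean onOffTailProb
  field_simp
  ring

theorem tendsto_onOffTailMean_div (ht : Tendsto t atTop atTop) (hsub : t =o[atTop] id) :
    Tendsto (fun P => onOffTailMean t P / (1 + 2 * P)) atTop (𝓝 1) := by
  have hA := tendsto_exp_neg_atTop_nhds_zero.comp ht
  have hB := tendsto_exp_neg_div_two_mul_add_one hsub
  have hratio := tendsto_div_two_mul_add_one_of_isLittleO hsub
  have hAt := tendsto_exp_neg_mul_add_one_atTop.comp ht
  have hlin : Tendsto (fun P : ℝ => 1 + 2 * P) atTop atTop :=
    tendsto_atTop_add_const_left _ 1 (tendsto_id.const_mul_atTop two_pos)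
  have hnum := (hAt.div_atTop hlin).add (hB.mul (tendsto_const_nhds (x := (1 : ℝ)).add hratio))
  have hden := hA.add hB
  rw [zero_add, add_zero, mul_one] at hnum
  rw [zero_add] at hden
  refine (div_one (1 : ℝ) ▸ hnum.div hden one_ne_zero).congr' ?_
  filter_upwards [eventually_ge_atTop 0] with P hP
  exact (onOffTailMean_div_eq hP).symm

end Threshold

/-- Appendix B-A scaling: with threshold `t(P) = P^λ + b`, the probability
`p(P) = Pr[E₂]` tends to `1/2` and `m(P)/(1+2P) = E[|Y|² | E₂]/(1+2P)` tends to `1`. -/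
theorem stmt18 (lam b : ℝ) (hlam0 : 0 < lam) (hlam1 : lam < 1) :
    Tendsto (fun P : ℝ =>
        (1 / 2) * Real.exp (-(P ^ lam + b))
          + (1 / 2) * Real.exp (-(P ^ lam + b) / (2 * P + 1)))
      atTop (nhds (1 / 2)) ∧
    Tendsto (fun P : ℝ =>
        ((Real.exp (-(P ^ lam + b)) * ((P ^ lam + b) + 1)
            + Real.exp (-(P ^ lam + b) / (2 * P + 1)) * ((P ^ lam + b) + 1 + 2 * P))
          / (2 * ((1 / 2) * Real.exp (-(P ^ lam + b))
              + (1 / 2) * Real.exp (-(P ^ lam + b) / (2 * P + 1)))))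
          / (1 + 2 * P))
      atTop (nhds 1) := by
  have ht : Tendsto (fun P : ℝ => P ^ lam + b) atTop atTop :=
    tendsto_atTop_add_const_right _ b (tendsto_rpow_atTop hlam0)
  have hsub := isLittleO_rpow_add_const_id hlam1 b
  exact ⟨tendsto_onOffTailProb ht hsub, tendsto_onOffTailMean_div ht hsub⟩
end
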